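/- Let F ∈ ℂ^{n×n}, 𝐯 ∈ ℂ^{n×p}, Z ∈ ℂ^{n×jp}, h ∈ ℂ^{p×jp}, and let H ∈ ℂ^{jp×jp} be block upper triangular with respect to the partition into p×p blocks, with i-th diagonal block s_i·I_p. Assume: [𝐯 Z] ∈ ℂ^{n×(j+1)p} has full column rank; F·Z = 𝐯·h + Z·H; every s_i has positive real part; and no s_i is an eigenvalue of F. Then, for any B ∈ ℂ^{n×m}, the Lyapunov equation Ỹ·H + Hᴴ·Ỹ − Zᴴ B Bᴴ Z − hᴴ h = 0 has a unique Hermitian solution Ỹ ∈ ℂ^{jp×jp}, and this solution is positive definite. -/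

import Mathlib

/-!
The spectrum of the block triangular `H` is contained in `{s i}`, which lies in the open right
half-plane and is therefore disjoint from the spectrum of `-Hᴴ`. By Sylvester's theorem the
Lyapunov operator `Y ↦ Y H + Hᴴ Y` is then injective, hence bijective, so the solution exists, is
unique, and is Hermitian because the right-hand side `C = Zᴴ B Bᴴ Z + hᴴ h` is.

For semidefiniteness pass to the Cayley transform `A = (H - 1)(H + 1)⁻¹`: its eigenvalues
`(s - 1)/(s + 1)` lie in the open unit disc, so `Aⁿ → 0` by Gelfand's formula, and the solution
satisfies the Stein equation `Y - Aᴴ Y A = 2 Gᴴ C G ⪰ 0` with `G = (H + 1)⁻¹`. Hence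
`xᴴ Y x ≥ (Aⁿ x)ᴴ Y (Aⁿ x) → 0`.

For definiteness, the Lyapunov equation shows that `ker Y` is `H`-invariant and killed by `C`,
hence by `h`. A nonzero kernel would contain an eigenvector `y` of `H`, for an eigenvalue `s i`,
with `h y = 0`; then `F (Z y) = s i • Z y` and `Z y ≠ 0` by the rank condition, contradicting
`s i ∉ σ(F)`.
-/

open Matrix Filter Polynomial
open scoped ComplexOrder NNReal ENNReal Topology

theorem spectrum.tendsto_pow_atTop_nhds_zero_of_spectralRadius_lt_one {A : Type*} [NormedRing A]
    [NormedAlgebra ℂ A] [CompleteSpace A] {a : A} (ha : spectralRadius ℂ a < 1) :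
    Tendsto (fun n : ℕ => a ^ n) atTop (𝓝 0) := by
  obtain ⟨r, har, hr1⟩ := ENNReal.lt_iff_exists_nnreal_btwn.1 ha
  have hbound : ∀ᶠ n : ℕ in atTop, ‖a ^ n‖ ≤ (r : ℝ) ^ n := by
    filter_upwards [(pow_nnnorm_pow_one_div_tendsto_nhds_spectralRadius a).eventually_lt_const
      har, eventually_ge_atTop 1] with n hn hn1
    have hn0 : (0 : ℝ) < n := by exact_mod_cast hn1
    have := ENNReal.rpow_lt_rpow hn hn0
    rw [← ENNReal.rpow_mul, one_div_mul_cancel hn0.ne', ENNReal.rpow_one, ENNReal.rpow_natCast,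
      ← ENNReal.coe_pow, ENNReal.coe_lt_coe] at this
    exact_mod_cast this.le
  exact squeeze_zero_norm' hbound
    (tendsto_pow_atTop_nhds_zero_of_lt_one r.coe_nonneg (by exact_mod_cast hr1))

/-- The Cayley transform `c = (h - 1)(h + 1)⁻¹` turns the Lyapunov operator `y ↦ y h + h⋆ y`
into the Stein operator `y ↦ y - c⋆ y c`. -/
theorem sub_star_cayley_mul_mul_cayley {R : Type*} [Ring R] [StarRing R] {g h : R} (y : R)
    (hg : (h + 1) * g = 1) :
    y - star ((h - 1) * g) * y * ((h - 1) * g) = 2 • (star g * (y * h + star h * y) * g) := by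
  have hg' : star g * star (h + 1) = 1 := by rw [← star_mul, hg, star_one]
  calc y - star ((h - 1) * g) * y * ((h - 1) * g)
      = star g * star (h + 1) * y * ((h + 1) * g) - star ((h - 1) * g) * y * ((h - 1) * g) := by
        rw [hg, hg', one_mul, mul_one]
    _ = 2 • (star g * (y * h + star h * y) * g) := by
        simp only [star_mul, star_add, star_sub, star_one, two_nsmul]
        noncomm_ring

theorem SemiconjBy.aeval {R A : Type*} [CommSemiring R] [Semiring A] [Algebra R A] {a x y : A}
    (h : SemiconjBy a x y) (p : R[X]) : SemiconjBy a (aeval x p) (aeval y p) := by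
  simp only [SemiconjBy, aeval_eq_sum_range, Finset.mul_sum, Finset.sum_mul, mul_smul_comm,
    smul_mul_assoc, (h.pow_right _).eq]

theorem Complex.norm_lt_one_of_mul_add_one_eq_sub_one {μ z : ℂ} (hz : 0 < z.re)
    (h : μ * (z + 1) = z - 1) : ‖μ‖ < 1 := by
  have hlt : ‖z - 1‖ < ‖z + 1‖ := by
    rw [← sq_lt_sq₀ (norm_nonneg _) (norm_nonneg _), Complex.sq_norm, Complex.sq_norm,
      Complex.normSq_apply, Complex.normSq_apply]
    simp only [Complex.sub_re, Complex.add_re, Complex.sub_im, Complex.add_im, Complex.one_re,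
      Complex.one_im]
    nlinarith
  have hpos : 0 < ‖z + 1‖ := (norm_nonneg _).trans_lt hlt
  rw [← h, norm_mul] at hlt
  exact (mul_lt_iff_lt_one_left hpos).1 hlt

namespace Matrix

theorem PosSemidef.mulVec_eq_zero_right_of_add {ι 𝕜 : Type*} [Fintype ι] [RCLike 𝕜]
    {P Q : Matrix ι ι 𝕜} (hP : P.PosSemidef) (hQ : Q.PosSemidef) {v : ι → 𝕜}
    (hv : (P + Q) *ᵥ v = 0) : Q *ᵥ v = 0 := by
  rw [← (hP.add hQ).dotProduct_mulVec_zero_iff, add_mulVec, dotProduct_add] at hv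
  exact (hQ.dotProduct_mulVec_zero_iff v).1
    ((add_eq_zero_iff_of_nonneg (hP.dotProduct_mulVec_nonneg v)
      (hQ.dotProduct_mulVec_nonneg v)).1 hv).2

theorem exists_mulVec_eq_smul_of_forall_mulVec_mem {ι K : Type*} [Fintype ι] [Field K]
    [IsAlgClosed K] {H : Matrix ι ι K} (p : Submodule K (ι → K)) (hp : p ≠ ⊥)
    (hHp : ∀ v ∈ p, H *ᵥ v ∈ p) : ∃ v ∈ p, v ≠ 0 ∧ ∃ μ : K, H *ᵥ v = μ • v := by
  have : Nontrivial p := Submodule.nontrivial_iff_ne_bot.2 hp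
  obtain ⟨μ, hμ⟩ := Module.End.exists_eigenvalue (H.mulVecLin.restrict hHp)
  obtain ⟨⟨v, hv⟩, hvμ⟩ := hμ.exists_hasEigenvector
  exact ⟨v, hv, fun h => hvμ.2 (by simpa using h), μ, congrArg Subtype.val hvμ.apply_eq_smul⟩

theorem mem_spectrum_iff_exists_mulVec_eq_smul {ι K : Type*} [Fintype ι] [DecidableEq ι]
    [Field K] {M : Matrix ι ι K} {μ : K} : μ ∈ spectrum K M ↔ ∃ v ≠ 0, M *ᵥ v = μ • v := by
  rw [← spectrum_toLin', ← Module.End.hasEigenvalue_iff_mem_spectrum]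
  constructor
  · intro hμ
    obtain ⟨v, hv⟩ := hμ.exists_hasEigenvector
    exact ⟨v, hv.2, by simpa using hv.apply_eq_smul⟩
  · rintro ⟨v, hv0, hv⟩
    exact Module.End.hasEigenvalue_of_hasEigenvector (x := v) ⟨by simpa using hv, hv0⟩

/-- Sylvester: `χ_A(A) = 0`, while `χ_A(B)` is invertible because no eigenvalue of `B` is a root
of `χ_A`. -/
theorem eq_zero_of_mul_eq_mul_of_disjoint_spectrum {ι K : Type*} [Fintype ι] [DecidableEq ι]
    [Field K] [IsAlgClosed K] {A B X : Matrix ι ι K}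
    (hAB : Disjoint (spectrum K A) (spectrum K B)) (hX : X * A = B * X) : X = 0 := by
  cases isEmpty_or_nonempty ι
  · exact Subsingleton.elim _ _
  have hdeg : 0 < A.charpoly.degree := by
    rw [charpoly_degree_eq_dim]; exact_mod_cast Fintype.card_pos
  have hunit : IsUnit (aeval B A.charpoly) := by
    rw [← spectrum.zero_notMem_iff K, spectrum.map_polynomial_aeval_of_degree_pos _ _ hdeg]
    rintro ⟨μ, hμB, hμA⟩
    exact hAB.notMem_of_mem_right hμB (mem_spectrum_iff_isRoot_charpoly.2 hμA)
  rw [← hunit.mul_right_eq_zero, ← (SemiconjBy.aeval hX A.charpoly).eq,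
    aeval_self_charpoly, mul_zero]

theorem spectrum_subset_range_of_blockTriangular {α κ K : Type*} [LinearOrder α] [Fintype α]
    [DecidableEq α] [Fintype κ] [DecidableEq κ] [Field K] {H : Matrix (α × κ) (α × κ) K}
    {s : α → K} (htri : H.BlockTriangular Prod.fst)
    (hdiag : ∀ i a b, H (i, a) (i, b) = if a = b then s i else 0) :
    spectrum K H ⊆ Set.range s := by
  intro μ hμ
  by_contra hμs
  refine spectrum.mem_iff.1 hμ ?_
  have hblock (k : α) :
      (algebraMap K _ μ - H).toSquareBlock Prod.fst k = (μ - s k) • (1 : Matrix _ _ K) := by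
    ext ⟨⟨i, a⟩, rfl⟩ ⟨⟨i', b⟩, hi'⟩
    obtain rfl : i' = i := hi'
    by_cases hab : a = b
    · subst hab; simp [toSquareBlock_def, hdiag, algebraMap_eq_diagonal]
    · simp [toSquareBlock_def, hdiag, algebraMap_eq_diagonal, hab, Subtype.ext_iff]
  rw [isUnit_iff_isUnit_det, ((blockTriangular_algebraMap _).sub htri).det_fintype,
    isUnit_iff_ne_zero, Finset.prod_ne_zero_iff]
  intro k _
  rw [hblock, det_smul, det_one, mul_one]
  exact pow_ne_zero _ (sub_ne_zero.2 fun h => hμs ⟨k, h.symm⟩)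

variable {ι : Type*} [Fintype ι] [DecidableEq ι]

def lyapunovMap (H : Matrix ι ι ℂ) : Matrix ι ι ℂ →ₗ[ℂ] Matrix ι ι ℂ :=
  LinearMap.mulRight ℂ H + LinearMap.mulLeft ℂ Hᴴ

@[simp]
theorem lyapunovMap_apply (H Y : Matrix ι ι ℂ) : lyapunovMap H Y = Y * H + Hᴴ * Y := rfl

theorem lyapunovMap_conjTranspose (H Y : Matrix ι ι ℂ) :
    lyapunovMap H Yᴴ = (lyapunovMap H Y)ᴴ := by
  simp only [lyapunovMap_apply, conjTranspose_add, conjTranspose_mul, conjTranspose_conjTranspose]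
  abel

variable {H Y C : Matrix ι ι ℂ}

theorem lyapunovMap_injective (hH : ∀ μ ∈ spectrum ℂ H, 0 < μ.re) :
    Function.Injective (lyapunovMap H) := by
  rw [← LinearMap.ker_eq_bot, LinearMap.ker_eq_bot']
  intro Y hY
  refine eq_zero_of_mul_eq_mul_of_disjoint_spectrum (A := H) (B := -Hᴴ) ?_ ?_
  · refine Set.disjoint_left.2 fun μ hμ hμ' => ?_
    rw [← spectrum.neg_eq, ← star_eq_conjTranspose, spectrum.map_star] at hμ'
    have := hH _ hμ'
    simp only [Complex.star_def, Complex.conj_re, Complex.neg_re] at this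
    linarith [hH μ hμ]
  · rw [neg_mul, eq_neg_iff_add_eq_zero]
    exact hY

theorem isHermitian_of_lyapunovMap_eq (hinj : Function.Injective (lyapunovMap H))
    (hC : C.IsHermitian) (hYC : lyapunovMap H Y = C) : Y.IsHermitian :=
  hinj (by rw [lyapunovMap_conjTranspose, hYC, hC.eq])

theorem isUnit_add_one_of_re_pos (hH : ∀ μ ∈ spectrum ℂ H, 0 < μ.re) : IsUnit (H + 1) := by
  have h := spectrum.notMem_iff.1 fun hm => absurd (hH (-1) hm) (by norm_num)
  rwa [map_neg, map_one, ← neg_add', IsUnit.neg_iff, add_comm] at h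

theorem norm_lt_one_of_mem_spectrum_cayley (hH : ∀ μ ∈ spectrum ℂ H, 0 < μ.re) {μ : ℂ}
    (hμ : μ ∈ spectrum ℂ ((H - 1) * (H + 1)⁻¹)) : ‖μ‖ < 1 := by
  obtain ⟨v, hv0, hv⟩ := mem_spectrum_iff_exists_mulVec_eq_smul.1 hμ
  have hdet := (isUnit_iff_isUnit_det _).1 (isUnit_add_one_of_re_pos hH)
  obtain ⟨w, rfl⟩ : ∃ w, v = (H + 1) *ᵥ w :=
    ⟨(H + 1)⁻¹ *ᵥ v, by rw [mulVec_mulVec, mul_nonsing_inv _ hdet, one_mulVec]⟩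
  have hw0 : w ≠ 0 := fun h => hv0 (by rw [h, mulVec_zero])
  rw [mulVec_mulVec, mul_assoc, nonsing_inv_mul _ hdet, mul_one] at hv
  have key : (1 - μ) • (H *ᵥ w) = (1 + μ) • w := by
    simp only [sub_mulVec, add_mulVec, one_mulVec] at hv
    linear_combination (norm := module) hv
  have hμ1 : 1 - μ ≠ 0 := by
    intro h
    obtain rfl : μ = 1 := by linear_combination -h
    rw [h, zero_smul, eq_comm, smul_eq_zero] at key
    exact key.elim (by norm_num) hw0
  have hHw : H *ᵥ w = ((1 + μ) / (1 - μ)) • w := by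
    rw [div_eq_inv_mul, mul_smul, ← key, smul_smul, inv_mul_cancel₀ hμ1, one_smul]
  refine Complex.norm_lt_one_of_mul_add_one_eq_sub_one
    (hH _ (mem_spectrum_iff_exists_mulVec_eq_smul.2 ⟨w, hw0, hHw⟩)) ?_
  field_simp
  ring

theorem tendsto_pow_cayley (hH : ∀ μ ∈ spectrum ℂ H, 0 < μ.re) :
    Tendsto (fun n : ℕ => ((H - 1) * (H + 1)⁻¹) ^ n) atTop (𝓝 0) := by
  cases isEmpty_or_nonempty ι
  · exact tendsto_const_nhds.congr fun _ => Subsingleton.elim _ _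
  -- any submultiplicative norm will do; this one induces the entrywise topology
  let := Matrix.linftyOpNormedRing (n := ι) (α := ℂ)
  let := Matrix.linftyOpNormedAlgebra (R := ℂ) (n := ι) (α := ℂ)
  let : CompleteSpace (Matrix ι ι ℂ) := FiniteDimensional.complete ℂ _
  refine spectrum.tendsto_pow_atTop_nhds_zero_of_spectralRadius_lt_one ?_
  exact_mod_cast spectrum.spectralRadius_lt_of_forall_lt _ fun μ hμ =>
    (by exact_mod_cast norm_lt_one_of_mem_spectrum_cayley hH hμ : ‖μ‖₊ < 1)

theorem posSemidef_of_lyapunovMap_eq (hH : ∀ μ ∈ spectrum ℂ H, 0 < μ.re) (hY : Y.IsHermitian)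
    (hC : C.PosSemidef) (hYC : lyapunovMap H Y = C) : Y.PosSemidef := by
  set A := (H - 1) * (H + 1)⁻¹
  have hdet := (isUnit_iff_isUnit_det _).1 (isUnit_add_one_of_re_pos hH)
  have hstein (x : ι → ℂ) : star (A *ᵥ x) ⬝ᵥ (Y *ᵥ (A *ᵥ x)) ≤ star x ⬝ᵥ (Y *ᵥ x) := by
    have hQ : (Y - Aᴴ * Y * A).PosSemidef := by
      rw [← star_eq_conjTranspose, sub_star_cayley_mul_mul_cayley Y (mul_nonsing_inv _ hdet),
        star_eq_conjTranspose, star_eq_conjTranspose, ← lyapunovMap_apply, hYC, two_nsmul]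
      exact (hC.conjTranspose_mul_mul_same _).add (hC.conjTranspose_mul_mul_same _)
    have := hQ.dotProduct_mulVec_nonneg x
    rwa [sub_mulVec, dotProduct_sub, sub_nonneg, ← mulVec_mulVec, ← mulVec_mulVec,
      dotProduct_mulVec, ← star_mulVec] at this
  have hmono (n : ℕ) (x : ι → ℂ) :
      star (A ^ n *ᵥ x) ⬝ᵥ (Y *ᵥ (A ^ n *ᵥ x)) ≤ star x ⬝ᵥ (Y *ᵥ x) := by
    induction n with
    | zero => simp
    | succ n ih => rw [pow_succ', ← mulVec_mulVec]; exact (hstein _).trans ih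
  refine PosSemidef.of_dotProduct_mulVec_nonneg hY fun x => ?_
  have hcont : Continuous fun M : Matrix ι ι ℂ => star (M *ᵥ x) ⬝ᵥ (Y *ᵥ (M *ᵥ x)) := by
    fun_prop
  have hlim := (hcont.tendsto 0).comp (tendsto_pow_cayley hH)
  simp only [zero_mulVec, star_zero, zero_dotProduct] at hlim
  exact le_of_tendsto' hlim fun n => hmono n x

theorem mulVec_eq_zero_of_lyapunovMap_eq (hY : Y.IsHermitian) (hC : C.PosSemidef)
    (hYC : lyapunovMap H Y = C) {v : ι → ℂ} (hv : Y *ᵥ v = 0) : C *ᵥ v = 0 := by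
  rw [← hC.dotProduct_mulVec_zero_iff, ← hYC, lyapunovMap_apply, add_mulVec, dotProduct_add,
    ← mulVec_mulVec, ← mulVec_mulVec, hv, mulVec_zero, dotProduct_zero, add_zero,
    dotProduct_mulVec, ← hY.eq, ← star_mulVec, hv, star_zero, zero_dotProduct]

theorem mulVec_mulVec_eq_zero_of_lyapunovMap_eq (hY : Y.IsHermitian) (hC : C.PosSemidef)
    (hYC : lyapunovMap H Y = C) {v : ι → ℂ} (hv : Y *ᵥ v = 0) : Y *ᵥ (H *ᵥ v) = 0 := by
  have := congrArg (· *ᵥ v) hYC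
  simpa [add_mulVec, ← mulVec_mulVec, hv, mulVec_eq_zero_of_lyapunovMap_eq hY hC hYC hv]
    using this

theorem posDef_of_lyapunovMap_eq (hH : ∀ μ ∈ spectrum ℂ H, 0 < μ.re) (hY : Y.IsHermitian)
    (hC : C.PosSemidef) (hYC : lyapunovMap H Y = C)
    (hobs : ∀ (v : ι → ℂ) (μ : ℂ), H *ᵥ v = μ • v → C *ᵥ v = 0 → v = 0) : Y.PosDef := by
  have hpsd := posSemidef_of_lyapunovMap_eq hH hY hC hYC
  refine PosDef.of_dotProduct_mulVec_pos hY fun x hx =>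
    (hpsd.dotProduct_mulVec_nonneg x).lt_of_ne' ?_
  rw [ne_eq, hpsd.dotProduct_mulVec_zero_iff]
  intro hYx
  obtain ⟨v, hvY, hv0, μ, hHv⟩ := exists_mulVec_eq_smul_of_forall_mulVec_mem
    (LinearMap.ker Y.mulVecLin) ((Submodule.ne_bot_iff _).2 ⟨x, hYx, hx⟩)
    fun v hv => mulVec_mulVec_eq_zero_of_lyapunovMap_eq hY hC hYC hv
  exact hv0 (hobs v μ hHv (mulVec_eq_zero_of_lyapunovMap_eq hY hC hYC hvY))

theorem eq_zero_of_mulVec_eq_smul_of_mulVec_eq_zero {ν π : Type*} [Fintype ν] [DecidableEq ν]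
    [Fintype π] {F : Matrix ν ν ℂ} {V : Matrix ν π ℂ} {Z : Matrix ν ι ℂ} {h : Matrix π ι ℂ}
    (hFZ : F * Z = V * h + Z * H) (hZ : Function.Injective Z.mulVec)
    (hspec : ∀ μ ∈ spectrum ℂ H, μ ∉ spectrum ℂ F) {v : ι → ℂ} {μ : ℂ}
    (hHv : H *ᵥ v = μ • v) (hhv : h *ᵥ v = 0) : v = 0 := by
  by_contra hv0
  refine hspec μ (mem_spectrum_iff_exists_mulVec_eq_smul.2 ⟨v, hv0, hHv⟩)
    (mem_spectrum_iff_exists_mulVec_eq_smul.2 ⟨Z *ᵥ v, ?_, ?_⟩)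
  · exact fun hZv => hv0 (hZ (hZv.trans (mulVec_zero Z).symm))
  · rw [mulVec_mulVec, hFZ, add_mulVec, ← mulVec_mulVec, hhv, mulVec_zero, zero_add,
      ← mulVec_mulVec, hHv, mulVec_smul]

end Matrix

/-- Block version: given a block rational Arnoldi decomposition
`F·Z = V·h + Z·H` with `[V Z]` of full column rank and `H` block upper
triangular with diagonal blocks `s_i·I_p`, where each `s i` has positive real
part and is not an eigenvalue of `F`, the Lyapunov equation
`Yt·H + Hᴴ·Yt − ZᴴBBᴴZ − hᴴh = 0` has a unique Hermitian solution, and it is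
positive definite. -/
theorem stmt6 (n p j m : ℕ)
    (F : Matrix (Fin n) (Fin n) ℂ) (V : Matrix (Fin n) (Fin p) ℂ)
    (Z : Matrix (Fin n) (Fin j × Fin p) ℂ)
    (h : Matrix (Fin p) (Fin j × Fin p) ℂ)
    (H : Matrix (Fin j × Fin p) (Fin j × Fin p) ℂ) (s : Fin j → ℂ)
    (htri : ∀ (i k : Fin j) (a b : Fin p), k < i → H (i, a) (k, b) = 0)
    (hdiag : ∀ (i : Fin j) (a b : Fin p),
      H (i, a) (i, b) = if a = b then s i else 0)
    (hrank : LinearIndependent ℂ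
      (fun c : Fin p ⊕ (Fin j × Fin p) => (fromCols V Z)ᵀ c))
    (hbrad : F * Z = V * h + Z * H)
    (hre : ∀ i, 0 < (s i).re) (hspec : ∀ i, s i ∉ spectrum ℂ F)
    (B : Matrix (Fin n) (Fin m) ℂ) :
    ∃ Yt : Matrix (Fin j × Fin p) (Fin j × Fin p) ℂ,
      (Yt.IsHermitian ∧ Yt * H + Hᴴ * Yt - Zᴴ * B * Bᴴ * Z - hᴴ * h = 0 ∧
        Yt.PosDef) ∧
      ∀ Y' : Matrix (Fin j × Fin p) (Fin j × Fin p) ℂ,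
        Y'.IsHermitian ∧ Y' * H + Hᴴ * Y' - Zᴴ * B * Bᴴ * Z - hᴴ * h = 0 →
          Y' = Yt := by
  have hspecH : spectrum ℂ H ⊆ Set.range s :=
    spectrum_subset_range_of_blockTriangular (fun x y hxy => htri x.1 y.1 x.2 y.2 hxy) hdiag
  have hH : ∀ μ ∈ spectrum ℂ H, 0 < μ.re := fun μ hμ => by
    obtain ⟨i, rfl⟩ := hspecH hμ
    exact hre i
  have hinj := lyapunovMap_injective hH
  set C := Zᴴ * B * Bᴴ * Z + hᴴ * h with hCdef
  have hD : (Bᴴ * Z)ᴴ * (Bᴴ * Z) = Zᴴ * B * Bᴴ * Z := by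
    simp only [conjTranspose_mul, conjTranspose_conjTranspose, Matrix.mul_assoc]
  have hC : C.PosSemidef := by
    rw [hCdef, ← hD]
    exact (posSemidef_conjTranspose_mul_self _).add (posSemidef_conjTranspose_mul_self h)
  obtain ⟨Y, hY⟩ := LinearMap.injective_iff_surjective.1 hinj C
  have hYherm := isHermitian_of_lyapunovMap_eq hinj hC.isHermitian hY
  have hobs (v : Fin j × Fin p → ℂ) (μ : ℂ) (hHv : H *ᵥ v = μ • v)
      (hCv : C *ᵥ v = 0) : v = 0 :=
    eq_zero_of_mulVec_eq_smul_of_mulVec_eq_zero hbrad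
      (mulVec_injective_iff.2 (hrank.comp Sum.inr Sum.inr_injective))
      (fun μ hμ => by obtain ⟨i, rfl⟩ := hspecH hμ; exact hspec i) hHv
      ((conjTranspose_mul_self_mulVec_eq_zero h v).1
        ((hD ▸ posSemidef_conjTranspose_mul_self _).mulVec_eq_zero_right_of_add
          (posSemidef_conjTranspose_mul_self h) hCv))
  refine ⟨Y, ⟨hYherm, ?_, posDef_of_lyapunovMap_eq hH hYherm hC hY hobs⟩,
    fun Y' ⟨_, hY'⟩ => hinj ?_⟩
  · rw [sub_sub, sub_eq_zero]
    exact hY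
  · rw [hY, lyapunovMap_apply, ← sub_eq_zero, ← sub_sub, hY']
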